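/- arXiv:1112.5361 — 3 statements merged into one kernel-verified Lean document; each statement's English description precedes it below -/
import Mathlib

section
/- The operators $\bar L_k = \sum_{j\in\mathbb Z}(j-k)a_j a_{k-j}^*$ (regularized) satisfy the centerless Virasoro (Witt) relations $[\bar L_m, \bar L_n] = (m-n)\bar L_{m+n}$ for all $m,n \in \mathbb Z$. -/
/-! Give `V` the discrete topology. Then the regularized sums defining `L̄_k v` are convergent
series with finitely many nonzero terms, and the `HasSum` calculus applies. Bracketing with a
single summand gives `⁅a_j, L̄_n⁆ = j a_{j+n}` and `⁅a*_l, L̄_n⁆ = (l + n) a*_{l+n}`, hence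
`⁅L̄_m, (i - n) a_i a*_{n-i}⁆ v = (i - n) Z_i - i Z_{i+m}` with `Z_t = (t - m - n) a_t a*_{m+n-t} v`.
Summing over `i`, the shift `i ↦ i + m` turns the second series into `∑ (i - m) Z_i`, and
`(i - n) - (i - m) = m - n` leaves `(m - n) L̄_{m+n} v`. -/

theorem hasSum_of_forall_superset_eq_sum {ι M : Type*} [AddCommMonoid M] [TopologicalSpace M]
    {f : ι → M} {x : M} {S : Finset ι} (h : ∀ T : Finset ι, S ⊆ T → x = ∑ j ∈ T, f j) :
    HasSum f x :=
  tendsto_nhds_of_eventually_eq (Filter.eventually_atTop.2 ⟨S, fun T hT => (h T hT).symm⟩)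

theorem Summable.smul_of_discreteTopology {ι R M : Type*} [Zero R] [AddCommGroup M]
    [SMulWithZero R M] [TopologicalSpace M] [DiscreteTopology M] {f : ι → M} (hf : Summable f)
    (c : ι → R) : Summable fun i => c i • f i :=
  summable_of_hasFiniteSupport <| hf.hasFiniteSupport_of_discreteTopology.subset
    (Function.support_smul_subset_right c f)

theorem HasSum.sub_shifted_zsmul {M : Type*} [AddCommGroup M] [TopologicalSpace M]
    [DiscreteTopology M] {Z : ℤ → M} {x : M} (hZ : HasSum Z x) (m n : ℤ) :
    HasSum (fun i => (i - n) • Z i - i • Z (i + m)) ((m - n) • x) := by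
  have hn := (hZ.summable.smul_of_discreteTopology (· - n)).hasSum
  have hm := (hZ.summable.smul_of_discreteTopology (· - m)).hasSum
  have hdiff : ∑' i, (i - n) • Z i - ∑' i, (i - m) • Z i = (m - n) • x := by
    refine (hn.sub hm).unique ?_
    simpa only [← sub_smul, sub_sub_sub_cancel_left] using hZ.const_smul (m - n)
  rw [← hdiff]
  simpa using hn.sub ((Equiv.addRight m).hasSum_iff.2 hm)

theorem Ring.lie_mul {R : Type*} [Ring R] (x y z : R) : ⁅x, y * z⁆ = ⁅x, y⁆ * z + y * ⁅x, z⁆ := by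
  simp only [Ring.lie_def]
  noncomm_ring

theorem Ring.lie_zsmul {R : Type*} [Ring R] (x y : R) (k : ℤ) : ⁅x, k • y⁆ = k • ⁅x, y⁆ := by
  simp only [Ring.lie_def, mul_smul_comm, smul_mul_assoc, smul_sub]

theorem lie_eq_of_hasSum {ι R V : Type*} [CommRing R] [AddCommGroup V] [Module R V]
    [TopologicalSpace V] [DiscreteTopology V] {f : ι → Module.End R V} {A L G : Module.End R V}
    (hf : ∀ w, HasSum (fun i => f i w) (L w)) (hG : ∀ w, HasSum (fun i => ⁅A, f i⁆ w) (G w)) :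
    ⁅A, L⁆ = G := by
  ext w
  refine HasSum.unique ?_ (hG w)
  simpa [Ring.lie_def] using ((hf w).map A continuous_of_discreteTopology).sub (hf (A w))

section Witt

variable {R V : Type*} [CommRing R] [AddCommGroup V] [Module R V]

def wittSummand (a astar : ℤ → Module.End R V) (k j : ℤ) : Module.End R V :=
  (j - k) • (a j * astar (k - j))

variable {a astar : ℤ → Module.End R V}

theorem lie_a_wittSummand (ha : ∀ m n : ℤ, ⁅a m, a n⁆ = 0)
    (haa : ∀ m n : ℤ, ⁅a m, astar n⁆ = if m + n = 0 then 1 else 0) (j n i : ℤ) :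
    ⁅a j, wittSummand a astar n i⁆ = if i = j + n then j • a (j + n) else 0 := by
  rw [wittSummand, Ring.lie_zsmul, Ring.lie_mul, ha, haa]
  by_cases h : i = j + n
  · subst h
    simp
  · simp [h, show j + (n - i) ≠ 0 by omega]

theorem lie_astar_wittSummand (hastar : ∀ m n : ℤ, ⁅astar m, astar n⁆ = 0)
    (haa : ∀ m n : ℤ, ⁅a m, astar n⁆ = if m + n = 0 then 1 else 0) (l n i : ℤ) :
    ⁅astar l, wittSummand a astar n i⁆ = if i = -l then (l + n) • astar (l + n) else 0 := by
  have hskew : ⁅astar l, a i⁆ = -⁅a i, astar l⁆ := (neg_sub _ _).symm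
  rw [wittSummand, Ring.lie_zsmul, Ring.lie_mul, hastar, hskew, haa]
  by_cases h : i = -l
  · subst h
    rw [if_pos (neg_add_cancel l), if_pos rfl, show n - -l = l + n by ring]
    simp only [mul_zero, add_zero, neg_mul, one_mul, smul_neg, ← neg_smul, neg_sub,
      sub_neg_eq_add, add_comm n l]
  · simp [h, show i + l ≠ 0 by omega]

variable [TopologicalSpace V] [DiscreteTopology V]

theorem lie_a_eq_of_hasSum (ha : ∀ m n : ℤ, ⁅a m, a n⁆ = 0)
    (haa : ∀ m n : ℤ, ⁅a m, astar n⁆ = if m + n = 0 then 1 else 0) {n : ℤ} {L : Module.End R V}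
    (hL : ∀ w, HasSum (fun i => wittSummand a astar n i w) (L w)) (j : ℤ) :
    ⁅a j, L⁆ = j • a (j + n) :=
  lie_eq_of_hasSum hL fun w => by
    convert hasSum_ite_eq (j + n) ((j • a (j + n)) w) using 2 with i
    rw [lie_a_wittSummand ha haa]
    split_ifs <;> rfl

theorem lie_astar_eq_of_hasSum (hastar : ∀ m n : ℤ, ⁅astar m, astar n⁆ = 0)
    (haa : ∀ m n : ℤ, ⁅a m, astar n⁆ = if m + n = 0 then 1 else 0) {n : ℤ} {L : Module.End R V}
    (hL : ∀ w, HasSum (fun i => wittSummand a astar n i w) (L w)) (l : ℤ) :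
    ⁅astar l, L⁆ = (l + n) • astar (l + n) :=
  lie_eq_of_hasSum hL fun w => by
    convert hasSum_ite_eq (-l) (((l + n) • astar (l + n)) w) using 2 with i
    rw [lie_astar_wittSummand hastar haa]
    split_ifs <;> rfl

theorem lie_wittSummand_apply_eq_of_hasSum (ha : ∀ m n : ℤ, ⁅a m, a n⁆ = 0)
    (hastar : ∀ m n : ℤ, ⁅astar m, astar n⁆ = 0)
    (haa : ∀ m n : ℤ, ⁅a m, astar n⁆ = if m + n = 0 then 1 else 0) {m : ℤ} {L : Module.End R V}
    (hL : ∀ w, HasSum (fun i => wittSummand a astar m i w) (L w)) (n i : ℤ) (w : V) :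
    ⁅L, wittSummand a astar n i⁆ w =
      (i - n) • wittSummand a astar (m + n) i w - i • wittSummand a astar (m + n) (i + m) w := by
  have hskew : ∀ x : Module.End R V, ⁅L, x⁆ = -⁅x, L⁆ := fun x => (neg_sub _ _).symm
  rw [wittSummand, Ring.lie_zsmul, Ring.lie_mul, hskew, hskew, lie_a_eq_of_hasSum ha haa hL,
    lie_astar_eq_of_hasSum hastar haa hL]
  simp only [wittSummand, show m + n - (i + m) = n - i by ring, show n - i + m = m + n - i by ring,
    LinearMap.smul_apply, LinearMap.add_apply, LinearMap.neg_apply, Module.End.mul_apply, map_neg,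
    map_zsmul]
  module

end Witt

theorem stmt3 (V : Type*) [AddCommGroup V] [Module ℂ V]
    (a astar : ℤ → Module.End ℂ V)
    (ha : ∀ m n : ℤ, ⁅a m, a n⁆ = 0)
    (hastar : ∀ m n : ℤ, ⁅astar m, astar n⁆ = 0)
    (haa : ∀ m n : ℤ, ⁅a m, astar n⁆ =
      if m + n = 0 then (1 : Module.End ℂ V) else 0)
    (Lbar : ℤ → Module.End ℂ V)
    (hL : ∀ (k : ℤ) (v : V), ∃ S : Finset ℤ, ∀ T : Finset ℤ, S ⊆ T →
      Lbar k v = ∑ j ∈ T, ((j - k) • (a j * astar (k - j))) v)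
    (m n : ℤ) :
    ⁅Lbar m, Lbar n⁆ = (m - n) • Lbar (m + n) := by
  let _ : TopologicalSpace V := ⊥
  have _ : DiscreteTopology V := ⟨rfl⟩
  have hsum : ∀ k w, HasSum (fun j => wittSummand a astar k j w) (Lbar k w) := fun k w =>
    hasSum_of_forall_superset_eq_sum (hL k w).choose_spec
  refine lie_eq_of_hasSum (hsum n) fun w => ?_
  simp_rw [lie_wittSummand_apply_eq_of_hasSum ha hastar haa (hsum m)]
  exact (hsum (m + n) w).sub_shifted_zsmul m n
end

section
/- With notation as in the imaginary Wakimoto realization, $[\rho(e(z)), L(w)] = \rho(e(w))\,\partial_w\delta(z/w) - \mu\,\partial_w^2\big(a^*(w)\,\delta(z/w)\big)$. Consequently $[L_{-1}, \rho(e(z))] = \partial_z\rho(e(z))$ and $[L_0, \rho(e(z))] = z\partial_z\rho(e(z)) + \rho(e(z))$. -/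
/-!
Every free-field mode `X ∈ {a_p, a*_p, b_p}` has a commutator with `L_k` that can be computed
termwise on the (pointwise finite) mode expansion of `L_k`: only one or two summands contribute,
giving `[a_p, L_k] = p a_{p+k}`, `[a*_p, L_k] = (p+k) a*_{p+k}` and
`[b_p, L_k] = p b_{p+k} - δ_{p+k,0} μ p (k+1)`. Commuting `L_n` termwise through the expansion of
`e_m` with the Leibniz rule and shifting the summation index of each corrected factor, the weights
of the factors of `a a* a*` and of `a* b` add up to `m`, which gives `-m e_{m+n}`; the background
charge term of `[b_p, L_n]` leaves `μ n (n+1) a*_{m+n}`. The two consequences are the cases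
`n = -1` and `n = 0`.
-/

open Function

namespace Ring

variable {A : Type*} [Ring A]

theorem lie_skew (x y : A) : -⁅y, x⁆ = ⁅x, y⁆ := by
  simp only [lie_def, neg_sub]

theorem lie_zsmul_s12 (n : ℤ) (x y : A) : ⁅x, n • y⁆ = n • ⁅x, y⁆ := by
  simp only [lie_def, mul_smul_comm, smul_mul_assoc, smul_sub]

theorem lie_mul_s12 (x y z : A) : ⁅x, y * z⁆ = ⁅x, y⁆ * z + y * ⁅x, z⁆ := by
  simp only [lie_def]
  noncomm_ring

end Ring

section FiniteSums

variable {ι M : Type*} [AddCommGroup M]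

theorem hasFiniteSupport_and_finsum_eq_of_forall_superset {f : ι → M} {S : Finset ι}
    (h : ∀ T : Finset ι, S ⊆ T → ∑ i ∈ T, f i = ∑ i ∈ S, f i) :
    HasFiniteSupport f ∧ ∑ᶠ i, f i = ∑ i ∈ S, f i := by
  classical
  have hS : support f ⊆ S := fun j hj => by
    by_contra hjS
    have := h (insert j S) (Finset.subset_insert j S)
    rw [Finset.sum_insert hjS, add_eq_right] at this
    exact hj this
  exact ⟨S.finite_toSet.subset hS, finsum_eq_finsetSum_of_support_subset f hS⟩

theorem finsum_add_comp_add_right {G : Type*} [AddGroup G] {f g : G → M}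
    (hf : HasFiniteSupport f) (hg : HasFiniteSupport g) (c : G) :
    ∑ᶠ i, (f i + g (i + c)) = ∑ᶠ i, (f i + g i) := by
  rw [finsum_add_distrib hf (hg.fun_comp_of_injective (add_left_injective c)),
    finsum_add_distrib hf hg]
  exact congrArg _ (finsum_comp_equiv (Equiv.addRight c))

theorem hasFiniteSupport_ite {P : ι → Prop} [DecidablePred P] (hP : {i | P i}.Finite) (f : ι → M) :
    HasFiniteSupport fun i => if P i then f i else 0 :=
  hP.subset fun _ hi => by_contra fun hPi => hi (if_neg hPi)

end FiniteSums

theorem LinearMap.finsum_apply {R ι M N : Type*} [Semiring R] [AddCommMonoid M]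
    [AddCommMonoid N] [Module R M] [Module R N] {F : ι → M →ₗ[R] N} (hF : HasFiniteSupport F)
    (v : M) : (∑ᶠ i, F i) v = ∑ᶠ i, F i v :=
  map_finsum (LinearMap.evalAddMonoidHom v) hF

theorem finsum_lie_apply {R ι V : Type*} [CommRing R] [AddCommGroup V] [Module R V]
    (X : Module.End R V) {F : ι → Module.End R V} {v : V}
    (hv : HasFiniteSupport fun i => F i v) (hXv : HasFiniteSupport fun i => F i (X v)) :
    ∑ᶠ i, ⁅X, F i⁆ v = X (∑ᶠ i, F i v) - ∑ᶠ i, F i (X v) := by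
  rw [map_finsum X hv, ← finsum_sub_distrib (hv.fun_comp (map_zero X)) hXv]
  rfl

section Wakimoto

variable {V : Type*} [AddCommGroup V] [Module ℂ V] {a astar b L e : ℤ → Module.End ℂ V} {μ γ : ℂ}

structure FreeFieldRelations (a astar b : ℤ → Module.End ℂ V) : Prop where
  lie_a_astar : ∀ m n : ℤ, ⁅a m, astar n⁆ = if m + n = 0 then 1 else 0
  lie_a_a : ∀ m n : ℤ, ⁅a m, a n⁆ = 0
  lie_astar_astar : ∀ m n : ℤ, ⁅astar m, astar n⁆ = 0
  lie_a_b : ∀ m n : ℤ, ⁅a m, b n⁆ = 0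
  lie_astar_b : ∀ m n : ℤ, ⁅astar m, b n⁆ = 0
  lie_b_b : ∀ m n : ℤ, ⁅b m, b n⁆ = if m + n = 0 then ((2 : ℂ) * m) • 1 else 0

def lTermA (a astar : ℤ → Module.End ℂ V) (k j : ℤ) : Module.End ℂ V :=
  (j - k) • (a j * astar (k - j))

def lTermB (b : ℤ → Module.End ℂ V) (k j : ℤ) : Module.End ℂ V :=
  if j < 0 then b j * b (k - j) else b (k - j) * b j

def eTermA (a astar : ℤ → Module.End ℂ V) (n : ℤ) (p : ℤ × ℤ) : Module.End ℂ V :=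
  a (n - p.1 - p.2) * astar p.1 * astar p.2

def eTermB (astar b : ℤ → Module.End ℂ V) (n j : ℤ) : Module.End ℂ V :=
  astar j * b (n - j)

def IsWakimotoL (a astar b : ℤ → Module.End ℂ V) (μ : ℂ) (L : ℤ → Module.End ℂ V) : Prop :=
  ∀ (k : ℤ) (v : V), HasFiniteSupport (fun j => lTermA a astar k j v) ∧
    HasFiniteSupport (fun j => lTermB b k j v) ∧
    L k v = ∑ᶠ j, lTermA a astar k j v + (1 / 4 : ℂ) • ∑ᶠ j, lTermB b k j v
      - (μ / 2 * (k + 1)) • b k v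

def IsWakimotoE (a astar b : ℤ → Module.End ℂ V) (γ : ℂ) (e : ℤ → Module.End ℂ V) : Prop :=
  ∀ (n : ℤ) (v : V), HasFiniteSupport (fun p => eTermA a astar n p v) ∧
    HasFiniteSupport (fun j => eTermB astar b n j v) ∧
    e n v = ∑ᶠ p, eTermA a astar n p v - ∑ᶠ j, eTermB astar b n j v
      + ((1 - γ ^ 2) * n) • astar n v

theorem isWakimotoL_of_forall_superset
    (hL : ∀ (k : ℤ) (v : V), ∃ S₁ S₂ : Finset ℤ, ∀ T₁ T₂ : Finset ℤ, S₁ ⊆ T₁ → S₂ ⊆ T₂ →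
      L k v = ∑ j ∈ T₁, lTermA a astar k j v + (1 / 4 : ℂ) • ∑ j ∈ T₂, lTermB b k j v
        - (μ / 2 * (k + 1)) • b k v) :
    IsWakimotoL a astar b μ L := by
  intro k v
  obtain ⟨S₁, S₂, h⟩ := hL k v
  obtain ⟨hA, sumA⟩ := hasFiniteSupport_and_finsum_eq_of_forall_superset fun T hT => by
    simpa using (h T S₂ hT subset_rfl).symm.trans (h S₁ S₂ subset_rfl subset_rfl)
  obtain ⟨hB, sumB⟩ := hasFiniteSupport_and_finsum_eq_of_forall_superset fun T hT => by
    simpa using (h S₁ T subset_rfl hT).symm.trans (h S₁ S₂ subset_rfl subset_rfl)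
  exact ⟨hA, hB, by rw [sumA, sumB]; exact h S₁ S₂ subset_rfl subset_rfl⟩

theorem isWakimotoE_of_forall_superset
    (he : ∀ (n : ℤ) (v : V), ∃ (S₁ : Finset (ℤ × ℤ)) (S₂ : Finset ℤ),
      ∀ (T₁ : Finset (ℤ × ℤ)) (T₂ : Finset ℤ), S₁ ⊆ T₁ → S₂ ⊆ T₂ →
      e n v = ∑ p ∈ T₁, eTermA a astar n p v - ∑ j ∈ T₂, eTermB astar b n j v
        + ((1 - γ ^ 2) * n) • astar n v) :
    IsWakimotoE a astar b γ e := by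
  intro n v
  obtain ⟨S₁, S₂, h⟩ := he n v
  obtain ⟨hA, sumA⟩ := hasFiniteSupport_and_finsum_eq_of_forall_superset fun T hT => by
    simpa using (h T S₂ hT subset_rfl).symm.trans (h S₁ S₂ subset_rfl subset_rfl)
  obtain ⟨hB, sumB⟩ := hasFiniteSupport_and_finsum_eq_of_forall_superset fun T hT => by
    simpa using (h S₁ T subset_rfl hT).symm.trans (h S₁ S₂ subset_rfl subset_rfl)
  exact ⟨hA, hB, by rw [sumA, sumB]; exact h S₁ S₂ subset_rfl subset_rfl⟩

theorem IsWakimotoL.lie_eq_finsum (hL : IsWakimotoL a astar b μ L) {X : Module.End ℂ V}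
    {k : ℤ} {FA FB : ℤ → Module.End ℂ V} (hA : ∀ j, ⁅X, lTermA a astar k j⁆ = FA j)
    (hB : ∀ j, ⁅X, lTermB b k j⁆ = FB j) (hFA : HasFiniteSupport FA)
    (hFB : HasFiniteSupport FB) :
    ⁅X, L k⁆ = ∑ᶠ j, FA j + (1 / 4 : ℂ) • ∑ᶠ j, FB j - (μ / 2 * (k + 1)) • ⁅X, b k⁆ := by
  ext v
  obtain ⟨hAv, hBv, hLv⟩ := hL k v
  obtain ⟨hAXv, hBXv, hLXv⟩ := hL k (X v)
  have sumA := finsum_lie_apply X hAv hAXv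
  have sumB := finsum_lie_apply X hBv hBXv
  simp only [hA, hB, ← LinearMap.finsum_apply hFA, ← LinearMap.finsum_apply hFB] at sumA sumB
  simp only [Ring.lie_def, LinearMap.sub_apply, LinearMap.add_apply, LinearMap.smul_apply,
    Module.End.mul_apply, sumA, sumB, hLv, hLXv, map_add, map_sub, map_smul]
  module

theorem IsWakimotoE.lie_apply_eq_finsum (he : IsWakimotoE a astar b γ e)
    (X : Module.End ℂ V) (n : ℤ) (v : V) :
    ⁅X, e n⁆ v = ∑ᶠ p, ⁅X, eTermA a astar n p⁆ v - ∑ᶠ j, ⁅X, eTermB astar b n j⁆ v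
      + ((1 - γ ^ 2) * n) • ⁅X, astar n⁆ v := by
  obtain ⟨hA, hB, hev⟩ := he n v
  obtain ⟨hA', hB', heXv⟩ := he n (X v)
  rw [finsum_lie_apply X hA hA', finsum_lie_apply X hB hB', Ring.lie_def, Ring.lie_def]
  simp only [LinearMap.sub_apply, Module.End.mul_apply, hev, heXv, map_add, map_sub, map_smul]
  module

namespace FreeFieldRelations

theorem lie_astar_lTermA (h : FreeFieldRelations a astar b) (p k j : ℤ) :
    ⁅astar p, lTermA a astar k j⁆ = if j + p = 0 then (k - j) • astar (k - j) else 0 := by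
  rw [lTermA, Ring.lie_zsmul_s12, Ring.lie_mul_s12, ← Ring.lie_skew, h.lie_a_astar, h.lie_astar_astar]
  split_ifs <;> simp only [neg_mul, one_mul, zero_mul, neg_zero, mul_zero, add_zero, smul_zero,
    smul_neg, ← neg_smul, neg_sub]

theorem lie_astar_lTermB (h : FreeFieldRelations a astar b) (p k j : ℤ) :
    ⁅astar p, lTermB b k j⁆ = 0 := by
  unfold lTermB
  split_ifs <;> simp [Ring.lie_mul_s12, h.lie_astar_b]

theorem lie_a_lTermA (h : FreeFieldRelations a astar b) (p k j : ℤ) :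
    ⁅a p, lTermA a astar k j⁆ = if p + (k - j) = 0 then (j - k) • a j else 0 := by
  rw [lTermA, Ring.lie_zsmul_s12, Ring.lie_mul_s12, h.lie_a_astar, h.lie_a_a]
  split_ifs <;> simp

theorem lie_a_lTermB (h : FreeFieldRelations a astar b) (p k j : ℤ) :
    ⁅a p, lTermB b k j⁆ = 0 := by
  unfold lTermB
  split_ifs <;> simp [Ring.lie_mul_s12, h.lie_a_b]

theorem lie_b_lTermA (h : FreeFieldRelations a astar b) (p k j : ℤ) :
    ⁅b p, lTermA a astar k j⁆ = 0 := by
  rw [lTermA, Ring.lie_zsmul_s12, Ring.lie_mul_s12, ← Ring.lie_skew (b p), ← Ring.lie_skew (b p),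
    h.lie_a_b, h.lie_astar_b]
  simp

theorem lie_b_lTermB (h : FreeFieldRelations a astar b) (p k j : ℤ) :
    ⁅b p, lTermB b k j⁆ = (if p + j = 0 then ((2 : ℂ) * p) • b (k - j) else 0)
      + if p + (k - j) = 0 then ((2 : ℂ) * p) • b j else 0 := by
  by_cases hj : j < 0
  all_goals
    simp only [lTermB, hj, if_true, if_false, Ring.lie_mul_s12, h.lie_b_b, ite_mul, mul_ite,
      smul_mul_assoc, mul_smul_comm, one_mul, mul_one, zero_mul, mul_zero]
  exact add_comm _ _

end FreeFieldRelations

namespace IsWakimotoL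

theorem lie_astar (hL : IsWakimotoL a astar b μ L) (h : FreeFieldRelations a astar b) (p k : ℤ) :
    ⁅astar p, L k⁆ = (p + k) • astar (p + k) := by
  have hp : {j : ℤ | j + p = 0}.Finite :=
    (Set.finite_singleton (-p)).subset fun j (hj : j + p = 0) => show j = -p by omega
  rw [hL.lie_eq_finsum (h.lie_astar_lTermA p k) (h.lie_astar_lTermB p k)
    (hasFiniteSupport_ite hp _) hasFiniteSupport_zero, h.lie_astar_b,
    finsum_eq_single _ (-p) fun j hj => if_neg (by omega),
    if_pos (neg_add_cancel p), sub_neg_eq_add, add_comm k]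
  simp

theorem lie_a (hL : IsWakimotoL a astar b μ L) (h : FreeFieldRelations a astar b) (p k : ℤ) :
    ⁅a p, L k⁆ = p • a (p + k) := by
  have hp : {j : ℤ | p + (k - j) = 0}.Finite :=
    (Set.finite_singleton (p + k)).subset fun j (hj : p + (k - j) = 0) => show j = p + k by omega
  rw [hL.lie_eq_finsum (h.lie_a_lTermA p k) (h.lie_a_lTermB p k) (hasFiniteSupport_ite hp _)
    hasFiniteSupport_zero, h.lie_a_b, finsum_eq_single _ (p + k) fun j hj => if_neg (by omega),
    if_pos (by ring), add_sub_cancel_right]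
  simp

theorem lie_b (hL : IsWakimotoL a astar b μ L) (h : FreeFieldRelations a astar b) (p k : ℤ) :
    ⁅b p, L k⁆ = p • b (p + k) - if p + k = 0 then (μ * p * (k + 1)) • 1 else 0 := by
  have hp₁ : {j : ℤ | p + j = 0}.Finite :=
    (Set.finite_singleton (-p)).subset fun j (hj : p + j = 0) => show j = -p by omega
  have hp₂ : {j : ℤ | p + (k - j) = 0}.Finite :=
    (Set.finite_singleton (p + k)).subset fun j (hj : p + (k - j) = 0) => show j = p + k by omega
  rw [hL.lie_eq_finsum (h.lie_b_lTermA p k) (h.lie_b_lTermB p k) hasFiniteSupport_zero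
    ((hasFiniteSupport_ite hp₁ _).add (hasFiniteSupport_ite hp₂ _)), h.lie_b_b,
    finsum_add_distrib (hasFiniteSupport_ite hp₁ _) (hasFiniteSupport_ite hp₂ _),
    finsum_eq_single _ (-p) fun j hj => if_neg (by omega),
    finsum_eq_single _ (p + k) fun j hj => if_neg (by omega),
    if_pos (add_neg_cancel p), if_pos (by ring), sub_neg_eq_add, add_comm k, finsum_zero]
  split_ifs <;> module

theorem lie_eTermA (hL : IsWakimotoL a astar b μ L) (h : FreeFieldRelations a astar b)
    (m n : ℤ) (q : ℤ × ℤ) :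
    ⁅L n, eTermA a astar m q⁆ = -((m - q.1 - q.2) • eTermA a astar (m + n) q
      + (q.1 + n) • eTermA a astar (m + n) (q + (n, 0))
      + (q.2 + n) • eTermA a astar (m + n) (q + (0, n))) := by
  obtain ⟨y, z⟩ := q
  simp only [eTermA, Ring.lie_mul_s12]
  simp only [← Ring.lie_skew (L n) (a _), ← Ring.lie_skew (L n) (astar _), hL.lie_a h,
    hL.lie_astar h, Prod.mk_add_mk, add_zero]
  rw [show m - y - z + n = m + n - y - z by ring, show m + n - (y + n) - z = m - y - z by ring,
    show m + n - y - (z + n) = m - y - z by ring]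
  simp only [add_mul, neg_mul, mul_neg, smul_mul_assoc, mul_smul_comm, mul_assoc]
  abel

theorem lie_eTermB (hL : IsWakimotoL a astar b μ L) (h : FreeFieldRelations a astar b)
    (m n j : ℤ) :
    ⁅L n, eTermB astar b m j⁆ = -((m - j) • eTermB astar b (m + n) j
      + (j + n) • eTermB astar b (m + n) (j + n))
      + if m - j + n = 0 then (μ * (m - j : ℤ) * (n + 1)) • astar j else 0 := by
  simp only [eTermB, Ring.lie_mul_s12]
  simp only [← Ring.lie_skew (L n) (b _), ← Ring.lie_skew (L n) (astar _), hL.lie_b h,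
    hL.lie_astar h]
  rw [show m - j + n = m + n - j by ring, show m + n - (j + n) = m - j by ring]
  split_ifs <;> simp only [neg_mul, mul_neg, smul_mul_assoc, mul_smul_comm, mul_sub, mul_one,
    sub_zero, neg_sub] <;> abel

theorem finsum_lie_eTermA_apply (hL : IsWakimotoL a astar b μ L)
    (h : FreeFieldRelations a astar b) (m n : ℤ) {v : V}
    (hE : HasFiniteSupport fun q => eTermA a astar (m + n) q v) :
    ∑ᶠ q, ⁅L n, eTermA a astar m q⁆ v = -(m • ∑ᶠ q, eTermA a astar (m + n) q v) := by
  set E := fun q => eTermA a astar (m + n) q v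
  set F : ℤ × ℤ → V := fun q => (m - q.1 - q.2) • E q
  set G₁ : ℤ × ℤ → V := fun q => q.1 • E q
  set G₂ : ℤ × ℤ → V := fun q => q.2 • E q
  have hF : HasFiniteSupport F := hE.fun_smul_right _
  have hG₁ : HasFiniteSupport G₁ := hE.fun_smul_right _
  have hG₂ : HasFiniteSupport G₂ := hE.fun_smul_right _
  calc ∑ᶠ q, ⁅L n, eTermA a astar m q⁆ v
      = -∑ᶠ q, (F q + G₂ (q + (0, n)) + G₁ (q + (n, 0))) := by
        rw [← finsum_neg_distrib]
        refine finsum_congr fun q => ?_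
        simp only [hL.lie_eTermA h, F, G₁, G₂, E, LinearMap.neg_apply, LinearMap.add_apply,
          LinearMap.smul_apply, Prod.fst_add, Prod.snd_add]
        abel
    _ = -∑ᶠ q, (F q + G₁ q + G₂ q) := by
        rw [finsum_add_comp_add_right
          (hF.fun_add (hG₂.fun_comp_of_injective (add_left_injective _))) hG₁]
        simp only [add_right_comm (F _) (G₂ _)]
        rw [finsum_add_comp_add_right (hF.fun_add hG₁) hG₂]
    _ = -(m • ∑ᶠ q, E q) := by
        rw [smul_finsum' m hE]
        congr 1
        exact finsum_congr fun q => by module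

theorem finsum_lie_eTermB_apply (hL : IsWakimotoL a astar b μ L)
    (h : FreeFieldRelations a astar b) (m n : ℤ) {v : V}
    (hE : HasFiniteSupport fun j => eTermB astar b (m + n) j v) :
    ∑ᶠ j, ⁅L n, eTermB astar b m j⁆ v
      = -(m • ∑ᶠ j, eTermB astar b (m + n) j v) - (μ * n * (n + 1)) • astar (m + n) v := by
  set E := fun j => eTermB astar b (m + n) j v
  set F : ℤ → V := fun j => (m - j) • E j
  set G : ℤ → V := fun j => j • E j
  set D : ℤ → V := fun j => if m - j + n = 0 then (μ * (m - j : ℤ) * (n + 1)) • astar j v else 0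
  have hF : HasFiniteSupport F := hE.fun_smul_right _
  have hG : HasFiniteSupport G := hE.fun_smul_right _
  have hD : HasFiniteSupport D := hasFiniteSupport_ite
    ((Set.finite_singleton (m + n)).subset fun j (hj : m - j + n = 0) => show j = m + n by omega) _
  calc ∑ᶠ j, ⁅L n, eTermB astar b m j⁆ v
      = -∑ᶠ j, (F j + G (j + n)) + ∑ᶠ j, D j := by
        rw [← finsum_neg_distrib, ← finsum_add_distrib
          (hF.fun_add (hG.fun_comp_of_injective (add_left_injective n))).fun_neg hD]
        refine finsum_congr fun j => ?_
        simp only [hL.lie_eTermB h, F, G, D, E, LinearMap.neg_apply, LinearMap.add_apply,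
          LinearMap.smul_apply, apply_ite (fun T : Module.End ℂ V => T v), LinearMap.zero_apply]
    _ = -∑ᶠ j, (F j + G j) + D (m + n) := by
        rw [finsum_add_comp_add_right hF hG,
          finsum_eq_single D (m + n) fun j hj => if_neg (by omega)]
    _ = -(m • ∑ᶠ j, E j) - (μ * n * (n + 1)) • astar (m + n) v := by
        rw [smul_finsum' m hE]
        simp only [D, if_pos (show m - (m + n) + n = 0 by ring)]
        rw [show ((m - (m + n) : ℤ) : ℂ) = -n by push_cast; ring]
        rw [finsum_congr fun j => show F j + G j = m • E j by module]
        module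

theorem lie_e (hL : IsWakimotoL a astar b μ L) (h : FreeFieldRelations a astar b)
    (he : IsWakimotoE a astar b γ e) (m n : ℤ) :
    ⁅L n, e m⁆ = (-m) • e (m + n) + (μ * n * (n + 1)) • astar (m + n) := by
  ext v
  obtain ⟨hA, hB, hev⟩ := he (m + n) v
  rw [he.lie_apply_eq_finsum, hL.finsum_lie_eTermA_apply h m n hA,
    hL.finsum_lie_eTermB_apply h m n hB, ← Ring.lie_skew (L n), hL.lie_astar h,
    LinearMap.add_apply, LinearMap.smul_apply, LinearMap.smul_apply, LinearMap.neg_apply,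
    LinearMap.smul_apply, hev]
  push_cast
  module

end IsWakimotoL

end Wakimoto

theorem stmt12 (V : Type*) [AddCommGroup V] [Module ℂ V]
    (a astar b L eOp : ℤ → Module.End ℂ V) (μ γ : ℂ)
    (haa : ∀ m n : ℤ, ⁅a m, astar n⁆ =
      if m + n = 0 then (1 : Module.End ℂ V) else 0)
    (ha : ∀ m n : ℤ, ⁅a m, a n⁆ = 0)
    (hst : ∀ m n : ℤ, ⁅astar m, astar n⁆ = 0)
    (hab : ∀ m n : ℤ, ⁅a m, b n⁆ = 0)
    (hsb : ∀ m n : ℤ, ⁅astar m, b n⁆ = 0)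
    (hbb : ∀ m n : ℤ, ⁅b m, b n⁆ =
      if m + n = 0 then ((2 : ℂ) * (m : ℂ)) • (1 : Module.End ℂ V) else 0)
    (hL : ∀ (k : ℤ) (v : V), ∃ S₁ S₂ : Finset ℤ, ∀ T₁ T₂ : Finset ℤ,
      S₁ ⊆ T₁ → S₂ ⊆ T₂ →
      L k v = (∑ j ∈ T₁, ((j - k) • (a j * astar (k - j))) v)
        + (1/4 : ℂ) • (∑ j ∈ T₂,
            (if j < 0 then b j * b (k - j) else b (k - j) * b j) v)
        - ((μ/2) * ((k : ℂ) + 1)) • b k v)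
    (he : ∀ (n : ℤ) (v : V), ∃ (S₁ : Finset (ℤ × ℤ)) (S₂ : Finset ℤ),
      ∀ (T₁ : Finset (ℤ × ℤ)) (T₂ : Finset ℤ), S₁ ⊆ T₁ → S₂ ⊆ T₂ →
      eOp n v = (∑ p ∈ T₁, (a (n - p.1 - p.2) * astar p.1 * astar p.2) v)
        - (∑ j ∈ T₂, (astar j * b (n - j)) v)
        + ((1 - γ ^ 2) * (n : ℂ)) • astar n v)
    (m n : ℤ) :
    ⁅eOp m, L n⁆ = m • eOp (m + n) - (μ * (n : ℂ) * ((n : ℂ) + 1)) • astar (m + n) ∧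
    ⁅L (-1), eOp m⁆ = (-m) • eOp (m - 1) ∧
    ⁅L 0, eOp m⁆ = (-m) • eOp m := by
  have lie_L_eOp := (isWakimotoL_of_forall_superset hL).lie_e ⟨haa, ha, hst, hab, hsb, hbb⟩
    (isWakimotoE_of_forall_superset he)
  refine ⟨?_, ?_, ?_⟩
  · rw [← Ring.lie_skew, lie_L_eOp]
    module
  · simpa [sub_eq_add_neg] using lie_L_eOp m (-1)
  · simpa using lie_L_eOp m 0
end

section
/- Let $\Phi^V(z): V_{\lambda,\kappa} \to V_{\lambda-m,\kappa}\hat\otimes\mathfrak F_m(z)$ be the intertwiner with $\Phi^V(z)(v_{\lambda,\kappa}) = v^\sharp_{\lambda,\kappa}$. Then $((z h(z))_- \otimes 1)\,\Phi^V(z)(v_{\lambda,\kappa}) = -m\,\Phi^V(z)(v_{\lambda,\kappa})$, where $(zh(z))_- = \sum_{k>0} h_k z^{-k}$. -/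
/- STATEMENT 16: For the intertwiner `Φ^V(z)` with
`Φ^V(z)(v_{λ,κ}) = v♯ = ∑_n ∑_{π∈P_n} α_π h_π v_{λ-m,κ} ⊗ u^m_n`, one has
`((z h(z))_- ⊗ 1) Φ^V(z)(v_{λ,κ}) = -m Φ^V(z)(v_{λ,κ})`, where
`(z h(z))_- = ∑_{k>0} h_k z^{-k}` and only the first tensor factor action is
applied.

Encoding: since `e u^m = 0`, `h u^m = m u^m`, and `z^k` shifts `u^m_n` to
`u^m_{n+k}`, the element `v♯` is recorded by its components
`w n = ∑_{π∈P_n} α_π h_π v ∈ V` (with `w n = 0` for `n < 0`), a partition `π`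
of `n` being encoded by its multiplicity function `c : Fin n → Fin (n+1)`
(the part `k+1` occurring `c k` times), `h_π = ∏_k h_{-(k+1)}^{c k}`, and
`α_π = β_{(c 0, …, c (n-1))}` given by the explicit solution of the recursion.
Applying `h_k ⊗ z^{-k}` (`k > 0`) to `v♯` and matching the `u^m`-components,
the claim reads `h_k (w n) = -m • w (n-k)` componentwise (the vector `v = v_{λ-m,κ}` satisfying
`e_n v = 0`, `h_k v = 0` for `k > 0`, `h_0 v = (λ(h) - m) v`, the Heisenberg
relations `[h_k, h_l] = k κ δ_{k+l,0}` and `[e_a, h_b] = -2 e_{a+b}`). -/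

noncomputable def betaCoef (m : ℕ) (κ β₁ : ℂ) {r : ℕ} (n : Fin r → ℕ) : ℂ :=
  (m : ℂ) ^ (((∑ i, n i : ℕ) : ℤ) - 1) * β₁ /
    ((-κ) ^ (((∑ i, n i : ℕ) : ℤ) - 1) *
      (∏ i : Fin r, ((i : ℕ) + 1 : ℂ) ^ (n i)) *
      ∏ i : Fin r, (Nat.factorial (n i) : ℂ))

/-- `h_π = h_{-1}^{c 0} h_{-2}^{c 1} ⋯ h_{-r}^{c (r-1)}`. -/
noncomputable def hpiOp {V : Type*} [AddCommGroup V] [Module ℂ V]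
    (ham : ℤ → Module.End ℂ V) {r : ℕ} (c : Fin r → ℕ) : Module.End ℂ V :=
  (List.ofFn fun k : Fin r => ham (-((k : ℕ) + 1 : ℤ)) ^ (c k)).prod

/-- The degree-`n` component `w n = ∑_{π∈P_n} α_π h_π v` of the singular
vector `v♯`. -/
noncomputable def wVec {V : Type*} [AddCommGroup V] [Module ℂ V]
    (ham : ℤ → Module.End ℂ V) (v : V) (m : ℕ) (κ β₁ : ℂ) (n : ℤ) : V :=
  if 0 ≤ n then
    ∑ c ∈ Finset.univ.filter
        (fun c : Fin n.toNat → Fin (n.toNat + 1) =>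
          ∑ k : Fin n.toNat, ((k : ℕ) + 1) * (c k : ℕ) = n.toNat),
      betaCoef m κ β₁ (fun k => (c k : ℕ)) • (hpiOp ham (fun k => (c k : ℕ))) v
  else 0


/-!
A positive mode `h_k` kills `v`, commutes with every `h_{-l}` for `l ≠ k`, and satisfies
`[h_k, h_{-k}] = k κ`. On a monomial `h_π v` it therefore acts as `k κ c_k ∂/∂h_{-k}`, where `c_k`
is the multiplicity of the part `k` in `π`: it removes one part `k`. Removing a part `k` is a
bijection from the partitions of `n` containing `k` onto the partitions of `n - k`, and the explicit
coefficients satisfy `α_π · c_k k κ = -m α_{π ∖ k}`. Since a partition is encoded by a multiplicity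
function of length at least its size, and appending zero multiplicities changes neither `α_π` nor
`h_π`, both sides are then sums over the same set.
-/

namespace Fintype

variable {ι α M : Type*} [Fintype ι] [DecidableEq ι] [CommMonoid M]

@[to_additive]
theorem prod_eq_mul_prod_update (g : ι → α → M) (f : ι → α) (j : ι) (a : α) (x : M)
    (h : g j (f j) = x * g j a) :
    ∏ i, g i (f i) = x * ∏ i, g i (Function.update f j a i) := by
  rw [← Finset.univ.mul_prod_erase _ (Finset.mem_univ j),
    ← Finset.univ.mul_prod_erase (fun i => g i (Function.update f j a i)) (Finset.mem_univ j),
    Function.update_self, h, mul_assoc]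
  congr 2
  refine Finset.prod_congr rfl fun i hi => ?_
  rw [Function.update_of_ne (Finset.ne_of_mem_erase hi)]

end Fintype

section

variable {R : Type*} [Ring R]

theorem lie_mul_eq_lie_mul_add_mul_lie (B X Y : R) :
    ⁅B, X * Y⁆ = ⁅B, X⁆ * Y + X * ⁅B, Y⁆ := by
  simp only [Ring.lie_def]
  noncomm_ring

variable {𝕜 : Type*} [CommRing 𝕜] [Algebra 𝕜 R]

theorem lie_pow_of_lie_eq_smul_one {B A : R} {t : 𝕜} (h : ⁅B, A⁆ = t • (1 : R)) (n : ℕ) :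
    ⁅B, A ^ n⁆ = ((n : 𝕜) * t) • A ^ (n - 1) := by
  induction n with
  | zero => simp [Ring.lie_def]
  | succ n ih =>
    rw [pow_succ, lie_mul_eq_lie_mul_add_mul_lie, ih, h]
    rcases n with _ | n
    · simp
    · simp only [Nat.add_sub_cancel, smul_mul_assoc, mul_smul_comm, mul_one, ← pow_succ]
      module

theorem lie_list_prod_ofFn_pow {r : ℕ} {B : R} {A : Fin r → R} {t : 𝕜} {j : Fin r}
    (hj : ⁅B, A j⁆ = t • (1 : R)) (hcomm : ∀ i, i ≠ j → Commute B (A i))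
    (c : Fin r → ℕ) :
    ⁅B, (List.ofFn fun i => A i ^ c i).prod⁆ =
      ((c j : 𝕜) * t) • (List.ofFn fun i => A i ^ Function.update c j (c j - 1) i).prod := by
  induction r with
  | zero => exact j.elim0
  | succ r ih =>
    simp only [List.ofFn_succ, List.prod_cons, lie_mul_eq_lie_mul_add_mul_lie]
    induction j using Fin.cases with
    | zero =>
      have htail : ⁅B, (List.ofFn fun i : Fin r => A i.succ ^ c i.succ).prod⁆ = 0 := by
        rw [← commute_iff_lie_eq]
        refine Commute.list_prod_right _ _ fun x hx => ?_
        obtain ⟨i, rfl⟩ := List.mem_ofFn.1 hx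
        exact (hcomm _ (Fin.succ_ne_zero i)).pow_right _
      rw [htail, mul_zero, add_zero, lie_pow_of_lie_eq_smul_one hj, smul_mul_assoc]
      simp
    | succ j =>
      have hhead : ⁅B, A 0 ^ c 0⁆ = 0 := by
        rw [← commute_iff_lie_eq]
        exact (hcomm 0 (Fin.succ_ne_zero j).symm).pow_right _
      rw [hhead, zero_mul, zero_add, ih (A := fun i => A i.succ) (c := fun i => c i.succ) hj
        (fun i hi => hcomm _ (fun h => hi (Fin.succ_injective _ h))), mul_smul_comm]
      congr 2
      congr! 3 with i
      exact congrArg _ (congrFun (Function.update_comp_eq_of_injective c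
        (Fin.succ_injective r) j _) i).symm

end

def partitionSize {r : ℕ} (c : Fin r → ℕ) : ℕ := ∑ i : Fin r, ((i : ℕ) + 1) * c i

def multiplicityPartitions (r n : ℕ) : Finset (Fin r → ℕ) :=
  (Fintype.piFinset fun _ => Finset.range (n + 1)).filter (partitionSize · = n)

section multiplicityPartitions

variable {r n : ℕ}

theorem le_partitionSize (c : Fin r → ℕ) (i : Fin r) : c i ≤ partitionSize c :=
  (Nat.le_mul_of_pos_left _ i.val.succ_pos).trans
    (Finset.single_le_sum (f := fun i : Fin r => ((i : ℕ) + 1) * c i)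
      (fun _ _ => Nat.zero_le _) (Finset.mem_univ i) :)

theorem mem_multiplicityPartitions {c : Fin r → ℕ} :
    c ∈ multiplicityPartitions r n ↔ partitionSize c = n := by
  simp only [multiplicityPartitions, Finset.mem_filter, Fintype.mem_piFinset,
    Finset.mem_range, and_iff_right_iff_imp]
  rintro rfl i
  exact Nat.lt_succ_of_le (le_partitionSize c i)

theorem partitionSize_snoc (c : Fin r → ℕ) (x : ℕ) :
    partitionSize (Fin.snoc (α := fun _ => ℕ) c x) = partitionSize c + (r + 1) * x := by
  simp [partitionSize, Fin.sum_univ_castSucc]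

theorem partitionSize_eq_of_ne_zero {c : Fin r → ℕ} {j : Fin r} (hj : c j ≠ 0) :
    partitionSize c = ((j : ℕ) + 1) + partitionSize (Function.update c j (c j - 1)) :=
  Fintype.sum_eq_add_sum_update (fun (i : Fin r) a => ((i : ℕ) + 1) * a) c j _ _ (by
    obtain ⟨d, hd⟩ := Nat.exists_eq_add_one_of_ne_zero hj
    rw [hd, Nat.add_sub_cancel]
    ring)

/-- Multiplicity functions of a partition of `n ≤ r` have no room for a part `r + 1`. -/
theorem sum_multiplicityPartitions_succ {M : Type*} [AddCommMonoid M] (hn : n ≤ r)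
    (f : (Fin (r + 1) → ℕ) → M) :
    ∑ c ∈ multiplicityPartitions (r + 1) n, f c =
      ∑ c ∈ multiplicityPartitions r n, f (Fin.snoc (α := fun _ => ℕ) c 0) := by
  have hlast : ∀ c ∈ multiplicityPartitions (r + 1) n, c (Fin.last r) = 0 := by
    intro c hc
    rw [mem_multiplicityPartitions] at hc
    have := partitionSize_snoc (Fin.init c) (c (Fin.last r))
    rw [Fin.snoc_init_self] at this
    nlinarith
  refine Finset.sum_nbij' Fin.init (Fin.snoc · 0) (fun c hc => ?_) (fun c hc => ?_)
    (fun c hc => ?_) (fun c _ => Fin.init_snoc _ _) (fun c hc => ?_)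
  · have := partitionSize_snoc (Fin.init c) (c (Fin.last r))
    rw [Fin.snoc_init_self, hlast c hc, mul_zero, add_zero] at this
    rwa [mem_multiplicityPartitions, ← this, ← mem_multiplicityPartitions]
  · rwa [mem_multiplicityPartitions, partitionSize_snoc, mul_zero, add_zero,
      ← mem_multiplicityPartitions]
  · rw [← hlast c hc, Fin.snoc_init_self]
  · rw [← hlast c hc, Fin.snoc_init_self]

theorem sum_multiplicityPartitions_eq_of_le {M : Type*} [AddCommMonoid M]
    (F : (r : ℕ) → (Fin r → ℕ) → M)
    (hF : ∀ r c, F (r + 1) (Fin.snoc (α := fun _ => ℕ) c 0) = F r c) (hn : n ≤ r) :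
    ∑ c ∈ multiplicityPartitions r n, F r c = ∑ c ∈ multiplicityPartitions n n, F n c := by
  induction r, hn using Nat.le_induction with
  | base => rfl
  | succ r hnr ih => simp only [sum_multiplicityPartitions_succ hnr, hF, ih]

/-- Removing one part `j + 1` is a bijection onto the partitions of `n - (j + 1)`. -/
theorem sum_multiplicityPartitions_filter_ne_zero {M : Type*} [AddCommMonoid M] {j : Fin r}
    (hj : (j : ℕ) + 1 ≤ n) (f : (Fin r → ℕ) → M) :
    ∑ c ∈ (multiplicityPartitions r n).filter (fun c => c j ≠ 0),
        f (Function.update c j (c j - 1)) =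
      ∑ c ∈ multiplicityPartitions r (n - (j + 1)), f c := by
  refine Finset.sum_nbij' (fun c => Function.update c j (c j - 1))
    (fun c => Function.update c j (c j + 1)) (fun c hc => ?_) (fun c hc => ?_)
    (fun c hc => ?_) (fun c _ => by simp) (fun c _ => rfl)
  · rw [Finset.mem_filter, mem_multiplicityPartitions] at hc
    rw [mem_multiplicityPartitions]
    have := partitionSize_eq_of_ne_zero hc.2
    omega
  · rw [mem_multiplicityPartitions] at hc
    have hne : Function.update c j (c j + 1) j ≠ 0 := by simp
    have := partitionSize_eq_of_ne_zero hne
    simp only [Function.update_self, Nat.add_sub_cancel, Function.update_idem,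
      Function.update_eq_self] at this
    rw [Finset.mem_filter, mem_multiplicityPartitions]
    exact ⟨by omega, hne⟩
  · rw [Finset.mem_filter] at hc
    simp [Nat.sub_add_cancel (Nat.pos_of_ne_zero hc.2)]

end multiplicityPartitions

section heisenberg

variable {V : Type*} [AddCommGroup V] [Module ℂ V] {ham : ℤ → Module.End ℂ V} {v : V}
  {m : ℕ} {κ β₁ : ℂ}

theorem wVec_of_neg {n : ℤ} (hn : n < 0) : wVec ham v m κ β₁ n = 0 :=
  if_neg (not_le.2 hn)

theorem wVec_natCast (n : ℕ) :
    wVec ham v m κ β₁ n =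
      ∑ c ∈ multiplicityPartitions n n, betaCoef m κ β₁ c • hpiOp ham c v := by
  rw [wVec, if_pos (Int.natCast_nonneg n), Int.toNat_natCast]
  refine Finset.sum_bij' (fun c _ i => (c i : ℕ))
    (fun c hc i => ⟨c i, Nat.lt_succ_of_le
      ((le_partitionSize c i).trans (mem_multiplicityPartitions.1 hc).le)⟩)
    (fun c hc => ?_) (fun c hc => ?_) (fun c _ => rfl) (fun c _ => rfl) (fun c _ => rfl)
  · exact mem_multiplicityPartitions.2 (Finset.mem_filter.1 hc).2
  · exact Finset.mem_filter.2 ⟨Finset.mem_univ _, mem_multiplicityPartitions.1 hc⟩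

theorem betaCoef_snoc_zero {r : ℕ} (c : Fin r → ℕ) :
    betaCoef m κ β₁ (Fin.snoc (α := fun _ => ℕ) c 0) = betaCoef m κ β₁ c := by
  simp [betaCoef, Fin.sum_univ_castSucc, Fin.prod_univ_castSucc]

theorem hpiOp_snoc_zero {r : ℕ} (c : Fin r → ℕ) :
    hpiOp ham (Fin.snoc (α := fun _ => ℕ) c 0) = hpiOp ham c := by
  rw [hpiOp, hpiOp, List.ofFn_succ', List.prod_concat]
  simp

theorem betaCoef_mul_eq_neg_mul_update {r : ℕ} (hm : m ≠ 0) (hκ : κ ≠ 0) {c : Fin r → ℕ}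
    {j : Fin r} (hj : c j ≠ 0) :
    betaCoef m κ β₁ c * ((c j : ℂ) * (((j : ℕ) + 1 : ℂ) * κ)) =
      -(m : ℂ) * betaCoef m κ β₁ (Function.update c j (c j - 1)) := by
  have hsum := Fintype.sum_eq_add_sum_update (fun _ a => a) c j (c j - 1) 1 (by omega)
  have hpow := Fintype.prod_eq_mul_prod_update (fun (i : Fin r) a => ((i : ℕ) + 1 : ℂ) ^ a)
    c j (c j - 1) ((j : ℕ) + 1)
    (by rw [← pow_succ', Nat.sub_add_cancel (Nat.pos_of_ne_zero hj)])
  have hfact := Fintype.prod_eq_mul_prod_update (fun _ a => (a.factorial : ℂ))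
    c j (c j - 1) (c j) (by rw [← Nat.cast_mul, Nat.mul_factorial_pred hj])
  unfold betaCoef
  rw [hsum, hpow, hfact]
  push_cast
  rw [add_sub_cancel_left, zpow_sub_one₀ (Nat.cast_ne_zero.2 hm),
    zpow_sub_one₀ (neg_ne_zero.2 hκ)]
  field_simp

section

variable (hhh : ∀ k l : ℤ, ⁅ham k, ham l⁆ =
  if k + l = 0 then ((k : ℂ) * κ) • (1 : Module.End ℂ V) else 0)
include hhh

theorem commute_ham_of_add_ne_zero {k l : ℤ} (h : k + l ≠ 0) : Commute (ham k) (ham l) := by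
  rw [commute_iff_lie_eq, hhh, if_neg h]

theorem lie_ham_hpiOp {r : ℕ} (c : Fin r → ℕ) (j : Fin r) :
    ⁅ham ((j : ℕ) + 1), hpiOp ham c⁆ =
      ((c j : ℂ) * (((j : ℕ) + 1 : ℂ) * κ)) •
        hpiOp ham (Function.update c j (c j - 1)) := by
  refine lie_list_prod_ofFn_pow ?_ (fun i hi => commute_ham_of_add_ne_zero hhh ?_) c
  · rw [hhh, if_pos (add_neg_cancel _)]
    push_cast
    rfl
  · have := Fin.val_ne_of_ne hi
    omega

theorem commute_ham_hpiOp {r : ℕ} (c : Fin r → ℕ) {k : ℤ} (hk : r < k) :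
    Commute (ham k) (hpiOp ham c) :=
  Commute.list_prod_right _ _ fun x hx => by
    obtain ⟨i, rfl⟩ := List.mem_ofFn.1 hx
    exact (commute_ham_of_add_ne_zero hhh (by omega)).pow_right _

variable (hhv : ∀ k : ℤ, 0 < k → ham k v = 0)
include hhv

theorem ham_hpiOp_apply {r : ℕ} (c : Fin r → ℕ) (j : Fin r) :
    ham ((j : ℕ) + 1) (hpiOp ham c v) =
      ((c j : ℂ) * (((j : ℕ) + 1 : ℂ) * κ)) •
        hpiOp ham (Function.update c j (c j - 1)) v := by
  have := congrArg (· v) (lie_ham_hpiOp hhh c j)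
  simpa [Ring.lie_def, hhv _ (by omega : (0 : ℤ) < (j : ℕ) + 1)] using this

theorem ham_wVec_natCast_of_lt {N K : ℕ} (h : N < K) : ham K (wVec ham v m κ β₁ N) = 0 := by
  rw [wVec_natCast, map_sum]
  refine Finset.sum_eq_zero fun c _ => ?_
  rw [map_smul, ← Module.End.mul_apply, (commute_ham_hpiOp hhh c (by omega)).eq,
    Module.End.mul_apply, hhv _ (by omega), map_zero, smul_zero]

theorem ham_wVec_natCast (hm : m ≠ 0) (hκ : κ ≠ 0) {N : ℕ} (j : Fin N) :
    ham ((j : ℕ) + 1) (wVec ham v m κ β₁ N) =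
      (-(m : ℂ)) • wVec ham v m κ β₁ ((N - (j + 1) : ℕ)) := by
  let F : (r : ℕ) → (Fin r → ℕ) → V := fun r c => betaCoef m κ β₁ c • hpiOp ham c v
  calc ham ((j : ℕ) + 1) (wVec ham v m κ β₁ N)
      = ∑ c ∈ multiplicityPartitions N N, (betaCoef m κ β₁ c * ((c j : ℂ) *
          (((j : ℕ) + 1 : ℂ) * κ))) • hpiOp ham (Function.update c j (c j - 1)) v := by
        simp only [wVec_natCast, map_sum, map_smul, ham_hpiOp_apply hhh hhv, smul_smul]
    _ = ∑ c ∈ (multiplicityPartitions N N).filter (fun c => c j ≠ 0),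
          (-(m : ℂ)) • F N (Function.update c j (c j - 1)) := by
        refine (Finset.sum_filter_of_ne (p := fun c => c j ≠ 0)
          fun c _ h hc => h (by simp [hc])).symm.trans (Finset.sum_congr rfl fun c hc => ?_)
        rw [betaCoef_mul_eq_neg_mul_update hm hκ (Finset.mem_filter.1 hc).2, mul_smul]
    _ = (-(m : ℂ)) • ∑ c ∈ multiplicityPartitions N (N - (j + 1)), F N c := by
        rw [← Finset.smul_sum, sum_multiplicityPartitions_filter_ne_zero (by omega) (F N)]
    _ = _ := by
        rw [sum_multiplicityPartitions_eq_of_le F (fun r c => by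
          simp only [F, betaCoef_snoc_zero, hpiOp_snoc_zero]) (Nat.sub_le _ _), wVec_natCast]

end

end heisenberg

theorem stmt16_general {V : Type*} [AddCommGroup V] [Module ℂ V]
    (ham : ℤ → Module.End ℂ V) (v : V) (m : ℕ) (hm : 0 < m)
    (κ β₁ : ℂ) (hκ : κ ≠ 0)
    (hhh : ∀ k l : ℤ, ⁅ham k, ham l⁆ =
      if k + l = 0 then ((k : ℂ) * κ) • (1 : Module.End ℂ V) else 0)
    (hhv : ∀ k : ℤ, 0 < k → ham k v = 0) :
    ∀ k : ℤ, 0 < k → ∀ n : ℤ,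
      ham k (wVec ham v m κ β₁ n) = (-(m : ℂ)) • wVec ham v m κ β₁ (n - k) := by
  intro k hk n
  lift k to ℕ using hk.le
  obtain ⟨j, rfl⟩ := Nat.exists_eq_add_one_of_ne_zero (by omega : k ≠ 0)
  rcases lt_or_ge n 0 with hn | hn
  · rw [wVec_of_neg hn, wVec_of_neg (by omega), map_zero, smul_zero]
  lift n to ℕ using hn
  rcases lt_or_ge n (j + 1) with hnj | hjn
  · rw [wVec_of_neg (n := n - (j + 1 : ℕ)) (by omega), smul_zero]
    exact ham_wVec_natCast_of_lt hhh hhv hnj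
  · have := ham_wVec_natCast (β₁ := β₁) hhh hhv hm.ne' hκ (⟨j, hjn⟩ : Fin n)
    push_cast [Nat.cast_sub hjn] at this ⊢
    exact this

theorem stmt16 {V : Type*} [AddCommGroup V] [Module ℂ V]
    (ham eop : ℤ → Module.End ℂ V) (v : V) (m : ℕ) (hm : 0 < m)
    (κ lamh β₁ : ℂ) (hκ : κ ≠ 0)
    (hhh : ∀ k l : ℤ, ⁅ham k, ham l⁆ =
      if k + l = 0 then ((k : ℂ) * κ) • (1 : Module.End ℂ V) else 0)
    (heh : ∀ a b : ℤ, ⁅eop a, ham b⁆ = (-2 : ℤ) • eop (a + b))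
    (hev : ∀ a : ℤ, eop a v = 0)
    (hhv : ∀ k : ℤ, 0 < k → ham k v = 0)
    (hh0 : ham 0 v = (lamh - m) • v) :
    ∀ k : ℤ, 0 < k → ∀ n : ℤ,
      ham k (wVec ham v m κ β₁ n) = (-(m : ℂ)) • wVec ham v m κ β₁ (n - k) :=
  stmt16_general ham v m hm κ β₁ hκ hhh hhv
end
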